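/- Let f_1,...,f_N : 2^E → ℝ be normalised, monotone submodular functions, F = Σ_i f_i, p_i = max_{A ⊆ E, F(A)≠0} f_i(A)/F(A), and B = max_i |EX(B(f_i))|. Then Σ_{i=1}^N p_i ≤ B·n where n = |E|, provided F(A) > 0 for all nonempty A. -/

import Mathlib

/-!
Subadditivity of a normalised submodular function gives `f i A ≤ ∑ e ∈ A, f i {e}`, and
`F {e} ≤ F A` for `e ∈ A` by monotonicity, so `p i ≤ ∑ e, f i {e} / F {e}`; summing over `i`
yields `∑ i, p i ≤ n`. It remains to see `1 ≤ B` when `N > 0`: the greedy vector of any ordering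
of `E` is an extreme point of `B(f i)`, and a polyhedron has finitely many extreme points, since
an extreme point is determined by its set of tight constraints (`Set.ncard` of an infinite set
is `0`, so finiteness is needed).
-/

open Finset Filter Topology

section Polyhedron

variable {V ι : Type*} [AddCommGroup V] [Module ℝ V]

def polyhedron (φ : ι → V →ₗ[ℝ] ℝ) (c : ι → ℝ) : Set V := {x | ∀ j, φ j x ≤ c j}

variable {φ : ι → V →ₗ[ℝ] ℝ} {c : ι → ℝ}

lemma eventually_add_smul_mem_polyhedron [Finite ι] {x v : V} (hx : x ∈ polyhedron φ c)
    (hv : ∀ j, φ j x = c j → φ j v = 0) :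
    ∀ᶠ t in 𝓝 (0 : ℝ), x + t • v ∈ polyhedron φ c := by
  change ∀ᶠ t in 𝓝 (0 : ℝ), ∀ j, φ j (x + t • v) ≤ c j
  simp only [map_add, map_smul, smul_eq_mul, eventually_all]
  intro j
  rcases (hx j).eq_or_lt with h | h
  · exact .of_forall fun t => by simp [hv j h, h]
  · have : Tendsto (fun t : ℝ => φ j x + t * φ j v) (𝓝 0) (𝓝 (φ j x)) :=
      (continuous_const.add (continuous_id.mul continuous_const)).tendsto' 0 _ (by simp)
    exact (this.eventually_lt_const h).mono fun _ => le_of_lt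

lemma eq_zero_of_extremePoint_of_tight_eq_zero [Finite ι] {x v : V}
    (hx : x ∈ (polyhedron φ c).extremePoints ℝ) (hv : ∀ j, φ j x = c j → φ j v = 0) :
    v = 0 := by
  have h := eventually_add_smul_mem_polyhedron hx.1 hv
  have h' : ∀ᶠ t in 𝓝[>] (0 : ℝ), x + t • v ∈ polyhedron φ c ∧ x + (-t) • v ∈ polyhedron φ c :=
    nhdsWithin_le_nhds (h.and ((continuous_neg.tendsto' 0 0 neg_zero).eventually h))
  obtain ⟨t, ⟨hplus, hminus⟩, ht⟩ := (h'.and self_mem_nhdsWithin).exists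
  have hseg : x ∈ openSegment ℝ (x + t • v) (x + (-t) • v) :=
    ⟨1 / 2, 1 / 2, by norm_num, by norm_num, by norm_num, by module⟩
  simpa [ne_of_gt ht] using hx.2 hplus hminus hseg

theorem finite_extremePoints_polyhedron [Finite ι] (φ : ι → V →ₗ[ℝ] ℝ) (c : ι → ℝ) :
    ((polyhedron φ c).extremePoints ℝ).Finite := by
  refine Set.Finite.of_finite_image (f := fun x => {j | φ j x = c j}) (Set.toFinite _) ?_
  intro x hx y _ hxy
  refine sub_eq_zero.mp (eq_zero_of_extremePoint_of_tight_eq_zero hx fun j hj => ?_)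
  have hj' : φ j y = c j := (congrArg (j ∈ ·) hxy).mp hj
  simp [hj, hj']

lemma mem_extremePoints_polyhedron_of_tight (J : Set ι) {x : V} (hx : x ∈ polyhedron φ c)
    (hJ : ∀ j ∈ J, φ j x = c j)
    (huniq : ∀ y ∈ polyhedron φ c, (∀ j ∈ J, φ j y = c j) → y = x) :
    x ∈ (polyhedron φ c).extremePoints ℝ := by
  refine ⟨hx, fun y hy z hz ⟨a, b, ha, hb, hab, hxyz⟩ => huniq y hy fun j hj => ?_⟩
  have hcomb : a * φ j y + b * φ j z = c j := by
    rw [← hJ j hj, ← hxyz]; simp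
  have hyj : φ j y ≤ c j := hy j
  have hzj : φ j z ≤ c j := hz j
  have hc : a * c j + b * c j = c j := by rw [← add_mul, hab, one_mul]
  refine le_antisymm hyj (le_of_not_gt fun hlt => ?_)
  linarith [mul_lt_mul_of_pos_left hlt ha, mul_le_mul_of_nonneg_left hzj hb.le]

end Polyhedron

section BasePolyhedron

variable {E : Type*} [Fintype E]

def basePolyhedron (f : Finset E → ℝ) : Set (E → ℝ) :=
  {x | (∀ S : Finset E, ∑ e ∈ S, x e ≤ f S) ∧ ∑ e, x e = f univ}

/-- The constraint `none` is `-x(E) ≤ -f(E)`, which together with `some univ` encodes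
`x(E) = f(E)`. -/
def baseForm : Option (Finset E) → (E → ℝ) →ₗ[ℝ] ℝ
  | some S => ∑ e ∈ S, LinearMap.proj e
  | none => -∑ e, LinearMap.proj e

def baseBound (f : Finset E → ℝ) : Option (Finset E) → ℝ
  | some S => f S
  | none => -f univ

lemma basePolyhedron_eq_polyhedron (f : Finset E → ℝ) :
    basePolyhedron f = polyhedron baseForm (baseBound f) := by
  ext x
  simp only [basePolyhedron, Set.mem_ofPred_eq, polyhedron, baseForm, baseBound, Option.forall,
    LinearMap.neg_apply, LinearMap.coe_sum, LinearMap.coe_proj, Finset.sum_apply, Function.eval,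
    neg_le_neg_iff]
  exact ⟨fun ⟨h, heq⟩ => ⟨heq.ge, h⟩, fun ⟨hge, h⟩ => ⟨h, (h univ).antisymm hge⟩⟩

end BasePolyhedron

section Greedy

variable {E α : Type*} [Fintype E] [LinearOrder α] (r : E → α)

def rankLT (a : E) : Finset E := univ.filter fun e => r e < r a

def rankLE (a : E) : Finset E := univ.filter fun e => r e ≤ r a

def IsRankInitial (T : Finset E) : Prop := ∀ a ∈ T, ∀ b, r b < r a → b ∈ T

variable {r}

@[simp] lemma mem_rankLT {a e : E} : e ∈ rankLT r a ↔ r e < r a := by simp [rankLT]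

@[simp] lemma mem_rankLE {a e : E} : e ∈ rankLE r a ↔ r e ≤ r a := by simp [rankLE]

lemma isRankInitial_rankLT (a : E) : IsRankInitial r (rankLT r a) := fun _ hb _ hcb =>
  mem_rankLT.2 (hcb.trans (mem_rankLT.1 hb))

lemma isRankInitial_rankLE (a : E) : IsRankInitial r (rankLE r a) := fun _ hb _ hcb =>
  mem_rankLE.2 (hcb.le.trans (mem_rankLE.1 hb))

lemma subset_rankLT_of_le (hr : Function.Injective r) {a : E} {s : Finset E} (ha : a ∉ s)
    (hs : ∀ x ∈ s, r x ≤ r a) : s ⊆ rankLT r a := fun x hx =>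
  mem_rankLT.2 <| (hs x hx).lt_of_ne fun h => ha (hr h ▸ hx)

variable [DecidableEq E]

lemma rankLE_eq_insert_rankLT (hr : Function.Injective r) (a : E) :
    rankLE r a = insert a (rankLT r a) := by
  ext e
  simp only [mem_rankLE, Finset.mem_insert, mem_rankLT, le_iff_lt_or_eq, hr.eq_iff]
  tauto

variable (r) (f : Finset E → ℝ)

noncomputable def greedyVector (e : E) : ℝ := f (rankLE r e) - f (rankLT r e)

lemma sum_greedyVector_of_isRankInitial (hr : Function.Injective r) (h0 : f ∅ = 0)
    (T : Finset E) (hT : IsRankInitial r T) : ∑ e ∈ T, greedyVector r f e = f T := by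
  induction T using Finset.induction_on_max_value r with
  | empty => simp [h0]
  | insert a s ha hs ih =>
    have hsa : s = rankLT r a := by
      refine (subset_rankLT_of_le hr ha hs).antisymm fun b hb => ?_
      have hba : r b < r a := mem_rankLT.1 hb
      exact (Finset.mem_insert.1 (hT a (mem_insert_self a s) b hba)).resolve_left
        fun h => hba.ne (congrArg r h)
    subst hsa
    rw [sum_insert ha, ih (isRankInitial_rankLT a), greedyVector, rankLE_eq_insert_rankLT hr]
    ring

lemma sum_greedyVector_le (hr : Function.Injective r) (h0 : f ∅ = 0)
    (hsub : ∀ S T : Finset E, f (S ∩ T) + f (S ∪ T) ≤ f S + f T) (T : Finset E) :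
    ∑ e ∈ T, greedyVector r f e ≤ f T := by
  induction T using Finset.induction_on_max_value r with
  | empty => simp [h0]
  | insert a s ha hs ih =>
    have hsa := subset_rankLT_of_le hr ha hs
    have hmod := hsub (insert a s) (rankLT r a)
    rw [insert_inter_of_notMem (by simp), inter_eq_left.2 hsa, insert_union,
      union_eq_right.2 hsa, ← rankLE_eq_insert_rankLT hr] at hmod
    rw [sum_insert ha, greedyVector]
    linarith

lemma greedyVector_mem_basePolyhedron (hr : Function.Injective r) (h0 : f ∅ = 0)
    (hsub : ∀ S T : Finset E, f (S ∩ T) + f (S ∪ T) ≤ f S + f T) :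
    greedyVector r f ∈ basePolyhedron f :=
  ⟨sum_greedyVector_le r f hr h0 hsub,
    sum_greedyVector_of_isRankInitial r f hr h0 univ fun _ _ b _ => mem_univ b⟩

/-- The greedy vector is the only point of the base polyhedron that is tight on every
`r`-initial set. -/
lemma greedyVector_mem_extremePoints (hr : Function.Injective r) (h0 : f ∅ = 0)
    (hsub : ∀ S T : Finset E, f (S ∩ T) + f (S ∪ T) ≤ f S + f T) :
    greedyVector r f ∈ (basePolyhedron f).extremePoints ℝ := by
  have hmem := greedyVector_mem_basePolyhedron r f hr h0 hsub
  rw [basePolyhedron_eq_polyhedron] at hmem ⊢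
  refine mem_extremePoints_polyhedron_of_tight (some '' {T | IsRankInitial r T}) hmem ?_ ?_
  · rintro _ ⟨T, hT, rfl⟩
    simpa [baseForm, baseBound] using sum_greedyVector_of_isRankInitial r f hr h0 T hT
  · intro y _ hy
    have htight : ∀ T, IsRankInitial r T → ∑ e ∈ T, y e = f T := fun T hT => by
      simpa [baseForm, baseBound] using hy (some T) ⟨T, hT, rfl⟩
    funext a
    have hLE := htight _ (isRankInitial_rankLE a)
    rw [rankLE_eq_insert_rankLT hr, sum_insert (by simp), htight _ (isRankInitial_rankLT a),
      ← rankLE_eq_insert_rankLT hr] at hLE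
    rw [greedyVector]
    linarith

end Greedy

section Submodular

variable {E : Type*} [Fintype E] [DecidableEq E] {f : Finset E → ℝ}

lemma ncard_extremePoints_basePolyhedron_pos (h0 : f ∅ = 0)
    (hsub : ∀ S T : Finset E, f (S ∩ T) + f (S ∪ T) ≤ f S + f T) :
    0 < ((basePolyhedron f).extremePoints ℝ).ncard := by
  have hfin : ((basePolyhedron f).extremePoints ℝ).Finite := by
    rw [basePolyhedron_eq_polyhedron]
    exact finite_extremePoints_polyhedron _ _
  exact (Set.ncard_pos hfin).2 ⟨_, greedyVector_mem_extremePoints (Fintype.equivFin E) f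
    (Fintype.equivFin E).injective h0 hsub⟩

omit [Fintype E] in
lemma le_sum_singleton_of_submodular (h0 : f ∅ = 0)
    (hsub : ∀ S T : Finset E, f (S ∩ T) + f (S ∪ T) ≤ f S + f T) (A : Finset E) :
    f A ≤ ∑ e ∈ A, f {e} := by
  induction A using Finset.induction_on with
  | empty => simp [h0]
  | insert a s ha ih =>
    have h := hsub {a} s
    rw [singleton_inter_of_notMem ha, ← insert_eq, h0] at h
    rw [sum_insert ha]
    linarith

lemma div_le_sum_singleton_div {g : Finset E → ℝ} (hf0 : f ∅ = 0)
    (hfmono : ∀ S T : Finset E, S ⊆ T → f S ≤ f T)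
    (hfsub : ∀ S T : Finset E, f (S ∩ T) + f (S ∪ T) ≤ f S + f T)
    (hgmono : ∀ S T : Finset E, S ⊆ T → g S ≤ g T) (hgpos : ∀ A : Finset E, A.Nonempty → 0 < g A)
    (A : Finset E) : f A / g A ≤ ∑ e, f {e} / g {e} := by
  have hf_nonneg : ∀ e, 0 ≤ f {e} := fun e => hf0 ▸ hfmono ∅ {e} (empty_subset _)
  have hg_pos : ∀ e, 0 < g {e} := fun e => hgpos {e} (singleton_nonempty e)
  have hterm : ∀ e, 0 ≤ f {e} / g {e} := fun e => div_nonneg (hf_nonneg e) (hg_pos e).le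
  rcases A.eq_empty_or_nonempty with rfl | hA
  · simpa [hf0] using sum_nonneg fun e _ => hterm e
  calc f A / g A ≤ (∑ e ∈ A, f {e}) / g A :=
        div_le_div_of_nonneg_right (le_sum_singleton_of_submodular hf0 hfsub A) (hgpos A hA).le
    _ = ∑ e ∈ A, f {e} / g A := sum_div ..
    _ ≤ ∑ e ∈ A, f {e} / g {e} := sum_le_sum fun e he =>
        div_le_div_of_nonneg_left (hf_nonneg e) (hg_pos e) (hgmono _ _ (singleton_subset_iff.2 he))
    _ ≤ ∑ e, f {e} / g {e} := sum_le_sum_of_subset_of_nonneg (subset_univ A) fun e _ _ => hterm e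

end Submodular

theorem stmt_14 {E : Type*} [Fintype E] [DecidableEq E] (N : ℕ)
    (f : Fin N → Finset E → ℝ)
    (hnorm : ∀ i, f i ∅ = 0)
    (hmono : ∀ i, ∀ S T : Finset E, S ⊆ T → f i S ≤ f i T)
    (hsub : ∀ i, ∀ S T : Finset E, f i (S ∩ T) + f i (S ∪ T) ≤ f i S + f i T)
    (F : Finset E → ℝ) (hF : ∀ A, F A = ∑ i, f i A)
    (hFpos : ∀ A : Finset E, A.Nonempty → 0 < F A)
    (p : Fin N → ℝ)
    (hp : ∀ i, IsGreatest
      {r : ℝ | ∃ A : Finset E, F A ≠ 0 ∧ r = f i A / F A} (p i))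
    (B : ℕ)
    (hB : IsGreatest {b : ℕ | ∃ i : Fin N,
      b = (Set.extremePoints ℝ
        {x : E → ℝ | (∀ S : Finset E, ∑ e ∈ S, x e ≤ f i S) ∧
          ∑ e, x e = f i Finset.univ}).ncard} B) :
    ∑ i, p i ≤ (B : ℝ) * (Fintype.card E) := by
  rcases isEmpty_or_nonempty (Fin N) with _ | ⟨⟨i₀⟩⟩
  · simp only [univ_eq_empty, sum_empty]
    positivity
  have hB₁ : (1 : ℝ) ≤ B := by
    exact_mod_cast (ncard_extremePoints_basePolyhedron_pos (hnorm i₀) (hsub i₀)).trans_le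
      (hB.2 ⟨i₀, rfl⟩)
  have hFmono : ∀ S T : Finset E, S ⊆ T → F S ≤ F T := fun S T hST => by
    simpa only [hF] using sum_le_sum fun i _ => hmono i S T hST
  have hp_le : ∀ i, p i ≤ ∑ e, f i {e} / F {e} := fun i => by
    obtain ⟨A, -, hA⟩ := (hp i).1
    exact hA ▸ div_le_sum_singleton_div (hnorm i) (hmono i) (hsub i) hFmono hFpos A
  calc ∑ i, p i ≤ ∑ i, ∑ e, f i {e} / F {e} := sum_le_sum fun i _ => hp_le i
    _ = ∑ e, F {e} / F {e} := by rw [sum_comm]; simp only [← sum_div, hF]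
    _ = Fintype.card E := by
        simp [div_self (hFpos _ (singleton_nonempty _)).ne']
    _ ≤ B * Fintype.card E := le_mul_of_one_le_left (Nat.cast_nonneg _) hB₁
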